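/- arXiv:1804.04968 — 5 statements merged into one kernel-verified Lean document; each statement's English description precedes it below -/
import Mathlib

section
/- Let φ ∈ FO(~,𝒟), let x̄ = (x_1,…,x_n) be a tuple of variables with Fr(φ) ⊆ x̄, and let T be a team in a τ-structure 𝒜 with domain Y ⊇ x̄. Then (𝒜,T) ⊨ φ (in team semantics) if and only if 𝒜 ⊨ η^{x̄}_φ(x̄⟨T⟩) (in classical second-order semantics). -/
set_option autoImplicit false

open Classical

/-! ## First-order vocabularies, structures, terms -/

/-- A first-order vocabulary: function symbols and relation symbols with arities. -/
structure Vocab : Type 1 where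
  Func : Type
  fArity : Func → ℕ
  Rel : Type
  rArity : Rel → ℕ

/-- A `τ`-structure (with nonempty domain, as usual in first-order logic). -/
structure Struc (τ : Vocab) : Type 1 where
  Dom : Type
  nonempty : Nonempty Dom
  funcs : ∀ f : τ.Func, (Fin (τ.fArity f) → Dom) → Dom
  rels : ∀ R : τ.Rel, (Fin (τ.rArity R) → Dom) → Prop

/-- `τ`-terms over the variables `ℕ`. -/
inductive Term (τ : Vocab) : Type where
  | var : ℕ → Term τ
  | app : (f : τ.Func) → (Fin (τ.fArity f) → Term τ) → Term τ

namespace Term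

variable {τ : Vocab}

/-- The set of variables occurring in a term. -/
def vars : Term τ → Set ℕ
  | .var x => {x}
  | .app _ ts => ⋃ i, (ts i).vars

/-- Evaluation of a term under a (total) assignment. -/
def eval (A : Struc τ) (s : ℕ → A.Dom) : Term τ → A.Dom
  | .var x => s x
  | .app f ts => A.funcs f fun i => (ts i).eval A s

/-- Size of a term. -/
def size : Term τ → ℕ
  | .var _ => 1
  | .app _ ts => 1 + ∑ i, (ts i).size

end Term

/-! ## Assignments and teams -/

/-- An assignment in `A` with domain `X`. -/
abbrev Assign {τ : Vocab} (A : Struc τ) (X : Set ℕ) : Type := X → A.Dom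

/-- A team in `A` with domain `X`: a set of assignments with domain `X`. -/
abbrev Team {τ : Vocab} (A : Struc τ) (X : Set ℕ) : Type := Set (Assign A X)

namespace Assign

variable {τ : Vocab} {A : Struc τ}

/-- Extend a partial assignment to a total one (junk values outside the domain). -/
noncomputable def toTotal {X : Set ℕ} (s : Assign A X) : ℕ → A.Dom :=
  fun n => if h : n ∈ X then s ⟨n, h⟩ else Classical.choice A.nonempty

/-- Restriction `s↾Y` of an assignment to a smaller domain. -/
def restrict {X Y : Set ℕ} (h : Y ⊆ X) (s : Assign A X) : Assign A Y :=
  fun y => s ⟨y.1, h y.2⟩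

/-- The supplemented assignment `s^x_a`, with domain `X ∪ {x}`, mapping `x` to `a`
and any other `y ∈ X` to `s y`. -/
def supp {X : Set ℕ} (s : Assign A X) (x : ℕ) (a : A.Dom) : Assign A (X ∪ {x}) :=
  fun y =>
    if h : (y : ℕ) = x then a
    else s ⟨y.1, by
      have hy := y.2
      simp only [Set.mem_union, Set.mem_singleton_iff] at hy
      exact hy.resolve_right h⟩

end Assign

namespace Team

variable {τ : Vocab} {A : Struc τ}

/-- Restriction `T↾Y` of a team to a smaller domain. -/
def restrict {X Y : Set ℕ} (h : Y ⊆ X) (T : Team A X) : Team A Y :=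
  Assign.restrict h '' T

/-- The supplemented team `T^x_f` for a (supplementing) function
`f` on assignments. -/
def supp {X : Set ℕ} (T : Team A X) (x : ℕ) (f : Assign A X → Set A.Dom) :
    Team A (X ∪ {x}) :=
  { t | ∃ s ∈ T, ∃ a ∈ f s, t = Assign.supp s x a }

end Team

/-- `t̄⟨T⟩`: the set of evaluations of the tuple of terms `ts` over a team `T`. -/
noncomputable def tupleEval {τ : Vocab} (A : Struc τ) {X : Set ℕ} {k : ℕ}
    (ts : Fin k → Term τ) (T : Team A X) : Set (Fin k → A.Dom) :=
  (fun s i => (ts i).eval A (Assign.toTotal s)) '' T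

/-! ## Classical first-order formulas (with equality) and Tarski semantics -/

inductive FOFormula (τ : Vocab) : Type where
  | rel : (R : τ.Rel) → (Fin (τ.rArity R) → Term τ) → FOFormula τ
  | eq : Term τ → Term τ → FOFormula τ
  | not : FOFormula τ → FOFormula τ
  | and : FOFormula τ → FOFormula τ → FOFormula τ
  | or : FOFormula τ → FOFormula τ → FOFormula τ
  | ex : ℕ → FOFormula τ → FOFormula τ
  | all : ℕ → FOFormula τ → FOFormula τ

namespace FOFormula

variable {τ : Vocab}

/-- Free variables. -/
def Fr : FOFormula τ → Set ℕ
  | .rel _ ts => ⋃ i, (ts i).vars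
  | .eq t u => t.vars ∪ u.vars
  | .not φ => φ.Fr
  | .and φ ψ => φ.Fr ∪ ψ.Fr
  | .or φ ψ => φ.Fr ∪ ψ.Fr
  | .ex x φ => φ.Fr \ {x}
  | .all x φ => φ.Fr \ {x}

/-- All variables (free and bound). -/
def vars : FOFormula τ → Set ℕ
  | .rel _ ts => ⋃ i, (ts i).vars
  | .eq t u => t.vars ∪ u.vars
  | .not φ => φ.vars
  | .and φ ψ => φ.vars ∪ ψ.vars
  | .or φ ψ => φ.vars ∪ ψ.vars
  | .ex x φ => insert x φ.vars
  | .all x φ => insert x φ.vars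

/-- Quantifier rank. -/
def qr : FOFormula τ → ℕ
  | .rel _ _ => 0
  | .eq _ _ => 0
  | .not φ => φ.qr
  | .and φ ψ => max φ.qr ψ.qr
  | .or φ ψ => max φ.qr ψ.qr
  | .ex _ φ => φ.qr + 1
  | .all _ φ => φ.qr + 1

/-- Size (length in a suitable encoding). -/
def size : FOFormula τ → ℕ
  | .rel _ ts => 1 + ∑ i, (ts i).size
  | .eq t u => 1 + t.size + u.size
  | .not φ => φ.size + 1
  | .and φ ψ => φ.size + ψ.size + 1
  | .or φ ψ => φ.size + ψ.size + 1
  | .ex _ φ => φ.size + 2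
  | .all _ φ => φ.size + 2

/-- Width: the number of distinct variables occurring in the formula. -/
noncomputable def width (φ : FOFormula τ) : ℕ := φ.vars.ncard

/-- Tarski satisfaction over total assignments. -/
def Sat (A : Struc τ) (s : ℕ → A.Dom) : FOFormula τ → Prop
  | .rel R ts => A.rels R fun i => (ts i).eval A s
  | .eq t u => t.eval A s = u.eval A s
  | .not φ => ¬ φ.Sat A s
  | .and φ ψ => φ.Sat A s ∧ ψ.Sat A s
  | .or φ ψ => φ.Sat A s ∨ ψ.Sat A s
  | .ex x φ => ∃ a : A.Dom, φ.Sat A (Function.update s x a)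
  | .all x φ => ∀ a : A.Dom, φ.Sat A (Function.update s x a)

end FOFormula

/-! ## Generalized dependencies -/

/-- The vocabulary with a single `k`-ary predicate. -/
def depVocab (k : ℕ) : Vocab where
  Func := Empty
  fArity := fun e => e.elim
  Rel := Unit
  rArity := fun _ => k

/-- A family of generalized dependencies: each index `i` has an arity `ar i` and a
first-order *sentence* over a single `ar i`-ary predicate. -/
structure DepFamily : Type 1 where
  idx : Type
  ar : idx → ℕ
  form : ∀ i : idx, FOFormula (depVocab (ar i))
  sentence : ∀ i : idx, (form i).Fr = ∅

/-- The `depVocab k`-structure with domain that of `A` interpreting the predicate as `S`. -/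
def depStruc {τ : Vocab} (A : Struc τ) {k : ℕ} (S : Set (Fin k → A.Dom)) :
    Struc (depVocab k) where
  Dom := A.Dom
  nonempty := A.nonempty
  funcs := fun f => f.elim
  rels := fun _ v => v ∈ S

/-- `A ⊨ δ(S)`: the dependency sentence `δ` holds in `(dom A, S)`. -/
def DepSat {τ : Vocab} (A : Struc τ) {k : ℕ} (δ : FOFormula (depVocab k))
    (S : Set (Fin k → A.Dom)) : Prop :=
  ∀ s : ℕ → A.Dom, δ.Sat (depStruc A S) s

/-! ## Team logic FO(~,𝒟) -/

inductive TFormula (τ : Vocab) (D : DepFamily) : Type where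
  | base : FOFormula τ → TFormula τ D
  | atom : (i : D.idx) → (Fin (D.ar i) → Term τ) → TFormula τ D
  | tnot : TFormula τ D → TFormula τ D
  | tand : TFormula τ D → TFormula τ D → TFormula τ D
  | tor : TFormula τ D → TFormula τ D → TFormula τ D
  | tex : ℕ → TFormula τ D → TFormula τ D
  | tall : ℕ → TFormula τ D → TFormula τ D

namespace TFormula

variable {τ : Vocab} {D : DepFamily}

/-- Free variables. -/
def Fr : TFormula τ D → Set ℕ
  | .base α => α.Fr
  | .atom _ ts => ⋃ i, (ts i).vars
  | .tnot φ => φ.Fr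
  | .tand φ ψ => φ.Fr ∪ ψ.Fr
  | .tor φ ψ => φ.Fr ∪ ψ.Fr
  | .tex x φ => φ.Fr \ {x}
  | .tall x φ => φ.Fr \ {x}

/-- All variables (free and bound). -/
def vars : TFormula τ D → Set ℕ
  | .base α => α.vars
  | .atom _ ts => ⋃ i, (ts i).vars
  | .tnot φ => φ.vars
  | .tand φ ψ => φ.vars ∪ ψ.vars
  | .tor φ ψ => φ.vars ∪ ψ.vars
  | .tex x φ => insert x φ.vars
  | .tall x φ => insert x φ.vars

/-- Quantifier rank. -/
def qr : TFormula τ D → ℕ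
  | .base _ => 0
  | .atom _ _ => 0
  | .tnot φ => φ.qr
  | .tand φ ψ => max φ.qr ψ.qr
  | .tor φ ψ => max φ.qr ψ.qr
  | .tex _ φ => φ.qr + 1
  | .tall _ φ => φ.qr + 1

/-- Size (length in a suitable encoding). -/
def size : TFormula τ D → ℕ
  | .base α => α.size
  | .atom _ ts => 1 + ∑ i, (ts i).size
  | .tnot φ => φ.size + 1
  | .tand φ ψ => φ.size + ψ.size + 1
  | .tor φ ψ => φ.size + ψ.size + 1
  | .tex _ φ => φ.size + 2
  | .tall _ φ => φ.size + 2

/-- Width: the number of distinct variables occurring in the formula. -/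
noncomputable def width (φ : TFormula τ D) : ℕ := φ.vars.ncard

end TFormula

/-- Team semantics of FO(~,𝒟). -/
def TSat {τ : Vocab} {D : DepFamily} (A : Struc τ) :
    TFormula τ D → (X : Set ℕ) → Team A X → Prop
  | .base α, _, T => ∀ s ∈ T, α.Sat A (Assign.toTotal s)
  | .atom i ts, _, T => DepSat A (D.form i) (tupleEval A ts T)
  | .tnot φ, X, T => ¬ TSat A φ X T
  | .tand φ ψ, X, T => TSat A φ X T ∧ TSat A ψ X T
  | .tor φ ψ, X, T => ∃ S U : Team A X, S ∪ U = T ∧ TSat A φ X S ∧ TSat A ψ X U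
  | .tex x φ, X, T => ∃ f : Assign A X → Set A.Dom,
      (∀ s ∈ T, (f s).Nonempty) ∧ TSat A φ (X ∪ {x}) (T.supp x f)
  | .tall x φ, X, T => TSat A φ (X ∪ {x}) (T.supp x fun _ => (Set.univ : Set A.Dom))

/-- Equivalence of team-logic formulas: same satisfying pairs `(A, T)`,
over all teams whose domain contains the free variables of both. -/
def TEquiv {τ : Vocab} {D : DepFamily} (φ ψ : TFormula τ D) : Prop :=
  ∀ (A : Struc τ) (X : Set ℕ), φ.Fr ∪ ψ.Fr ⊆ X →
    ∀ T : Team A X, TSat A φ X T ↔ TSat A ψ X T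

/-- The family of no dependencies at all: plain FO(~). -/
def emptyDeps : DepFamily where
  idx := Empty
  ar := fun e => e.elim
  form := fun e => e.elim
  sentence := fun e => e.elim

/-- `Eβ := ~¬β`. -/
def TFormula.E {τ : Vocab} {D : DepFamily} (β : FOFormula τ) : TFormula τ D :=
  .tnot (.base (.not β))

/-- Boolean disjunction `φ ⊻ ψ := ~(~φ ∧ ~ψ)`. -/
def TFormula.bdis {τ : Vocab} {D : DepFamily} (φ ψ : TFormula τ D) : TFormula τ D :=
  .tnot (.tand (.tnot φ) (.tnot ψ))

/-- Iterated splitting disjunction (nonempty list, head plus tail). -/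
def bigOr {τ : Vocab} {D : DepFamily} :
    TFormula τ D → List (TFormula τ D) → TFormula τ D
  | φ, [] => φ
  | φ, ψ :: l => .tor φ (bigOr ψ l)

/-- Iterated conjunction (nonempty list, head plus tail). -/
def bigAnd {τ : Vocab} {D : DepFamily} :
    TFormula τ D → List (TFormula τ D) → TFormula τ D
  | φ, [] => φ
  | φ, ψ :: l => .tand φ (bigAnd ψ l)

/-- Iterated Boolean disjunction (nonempty list, head plus tail). -/
def bigBdis {τ : Vocab} {D : DepFamily} :
    TFormula τ D → List (TFormula τ D) → TFormula τ D
  | φ, [] => φ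
  | φ, ψ :: l => TFormula.bdis φ (bigBdis ψ l)

/-- `⋁_{i=1}^{n+1} χ_i` (splitting disjunction). -/
def finBigOr {τ : Vocab} {D : DepFamily} {n : ℕ}
    (χ : Fin (n + 1) → TFormula τ D) : TFormula τ D :=
  bigOr (χ 0) (List.ofFn fun i : Fin n => χ i.succ)

/-- `⋀_{i=1}^{n+1} χ_i`. -/
def finBigAnd {τ : Vocab} {D : DepFamily} {n : ℕ}
    (χ : Fin (n + 1) → TFormula τ D) : TFormula τ D :=
  bigAnd (χ 0) (List.ofFn fun i : Fin n => χ i.succ)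

/-- The tower function: `expTower 0 m = m`, `expTower (k+1) m = 2 ^ expTower k m`. -/
def expTower : ℕ → ℕ → ℕ
  | 0, m => m
  | k + 1, m => 2 ^ expTower k m

/-! ## The second-order translation η (semantically) -/

/-- The tuple `x̄;y`: `x̄` itself if `y` occurs in `x̄`, and `x̄` extended by `y` otherwise. -/
noncomputable def semico {n : ℕ} (xs : Fin n → ℕ) (y : ℕ) : Σ m : ℕ, Fin m → ℕ :=
  if y ∈ Set.range xs then ⟨n, xs⟩ else ⟨n + 1, Fin.snoc xs y⟩

/-- `etaSem A φ n xs R` expresses `A ⊨ η^{x̄}_φ(R)`, i.e. the classical (second-order)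
semantics of the translation `η^{x̄}_φ` applied to the relation `R`. -/
def etaSem {τ : Vocab} {D : DepFamily} (A : Struc τ) :
    TFormula τ D → (n : ℕ) → (Fin n → ℕ) → Set (Fin n → A.Dom) → Prop
  | .base α, _, xs, R =>
      ∀ s : ℕ → A.Dom, (fun i => s (xs i)) ∈ R → α.Sat A s
  | .atom i ts, _, xs, R =>
      ∃ S : Set (Fin (D.ar i) → A.Dom),
        (∀ v : Fin (D.ar i) → A.Dom,
          v ∈ S ↔ ∃ s : ℕ → A.Dom,
            (fun j => s (xs j)) ∈ R ∧ (fun j => (ts j).eval A s) = v) ∧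
        DepSat A (D.form i) S
  | .tnot φ, n, xs, R => ¬ etaSem A φ n xs R
  | .tand φ ψ, n, xs, R => etaSem A φ n xs R ∧ etaSem A ψ n xs R
  | .tor φ ψ, n, xs, R =>
      ∃ S U : Set (Fin n → A.Dom),
        (∀ v, v ∈ R ↔ v ∈ S ∨ v ∈ U) ∧ etaSem A φ n xs S ∧ etaSem A ψ n xs U
  | .tex y φ, _, xs, R =>
      ∃ S : Set (Fin (semico xs y).1 → A.Dom),
        (∀ s : ℕ → A.Dom,
          (∃ b : A.Dom, (fun i => Function.update s y b (xs i)) ∈ R) ↔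
          (∃ b : A.Dom, (fun j => Function.update s y b ((semico xs y).2 j)) ∈ S)) ∧
        etaSem A φ (semico xs y).1 (semico xs y).2 S
  | .tall y φ, _, xs, R =>
      ∃ S : Set (Fin (semico xs y).1 → A.Dom),
        (∀ s : ℕ → A.Dom,
          (∃ b : A.Dom, (fun i => Function.update s y b (xs i)) ∈ R) ↔
          (∃ b : A.Dom, (fun j => Function.update s y b ((semico xs y).2 j)) ∈ S)) ∧
        etaSem A φ (semico xs y).1 (semico xs y).2 S ∧
        (∀ s : ℕ → A.Dom, (fun i => s (xs i)) ∈ R →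
          ∀ b : A.Dom, (fun j => Function.update s y b ((semico xs y).2 j)) ∈ S)

/-- `zetaSem A N φ n xs R` expresses `A ⊨ ζ^{x̄,p}_φ(R)` where `N = p(‖A‖)`: like
`etaSem`, but all second-order quantifiers are sparse, i.e. range only over relations
of cardinality at most `N`. -/
def zetaSem {τ : Vocab} {D : DepFamily} (A : Struc τ) (N : ℕ) :
    TFormula τ D → (n : ℕ) → (Fin n → ℕ) → Set (Fin n → A.Dom) → Prop
  | .base α, _, xs, R =>
      ∀ s : ℕ → A.Dom, (fun i => s (xs i)) ∈ R → α.Sat A s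
  | .atom i ts, _, xs, R =>
      ∃ S : Set (Fin (D.ar i) → A.Dom), S.Finite ∧ S.ncard ≤ N ∧
        (∀ v : Fin (D.ar i) → A.Dom,
          v ∈ S ↔ ∃ s : ℕ → A.Dom,
            (fun j => s (xs j)) ∈ R ∧ (fun j => (ts j).eval A s) = v) ∧
        DepSat A (D.form i) S
  | .tnot φ, n, xs, R => ¬ zetaSem A N φ n xs R
  | .tand φ ψ, n, xs, R => zetaSem A N φ n xs R ∧ zetaSem A N ψ n xs R
  | .tor φ ψ, n, xs, R =>
      ∃ S U : Set (Fin n → A.Dom), S.Finite ∧ S.ncard ≤ N ∧ U.Finite ∧ U.ncard ≤ N ∧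
        (∀ v, v ∈ R ↔ v ∈ S ∨ v ∈ U) ∧ zetaSem A N φ n xs S ∧ zetaSem A N ψ n xs U
  | .tex y φ, _, xs, R =>
      ∃ S : Set (Fin (semico xs y).1 → A.Dom), S.Finite ∧ S.ncard ≤ N ∧
        (∀ s : ℕ → A.Dom,
          (∃ b : A.Dom, (fun i => Function.update s y b (xs i)) ∈ R) ↔
          (∃ b : A.Dom, (fun j => Function.update s y b ((semico xs y).2 j)) ∈ S)) ∧
        zetaSem A N φ (semico xs y).1 (semico xs y).2 S
  | .tall y φ, _, xs, R =>
      ∃ S : Set (Fin (semico xs y).1 → A.Dom), S.Finite ∧ S.ncard ≤ N ∧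
        (∀ s : ℕ → A.Dom,
          (∃ b : A.Dom, (fun i => Function.update s y b (xs i)) ∈ R) ↔
          (∃ b : A.Dom, (fun j => Function.update s y b ((semico xs y).2 j)) ∈ S)) ∧
        zetaSem A N φ (semico xs y).1 (semico xs y).2 S ∧
        (∀ s : ℕ → A.Dom, (fun i => s (xs i)) ∈ R →
          ∀ b : A.Dom, (fun j => Function.update s y b ((semico xs y).2 j)) ∈ S)

/-- `‖A‖`: the size of a finite structure, i.e. the size of the domain plus the sizes of
the interpretations of all symbols of the vocabulary. -/
noncomputable def strucNorm {τ : Vocab} (A : Struc τ)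
    [Fintype τ.Rel] [Fintype τ.Func] : ℕ :=
  Nat.card A.Dom + (∑ R : τ.Rel, Set.ncard { v | A.rels R v }) +
    ∑ f : τ.Func, Nat.card A.Dom ^ τ.fArity f

/-! ## Modal team logic MTL -/

inductive MLFormula : Type where
  | prop : ℕ → MLFormula
  | neg : MLFormula → MLFormula
  | and : MLFormula → MLFormula → MLFormula
  | or : MLFormula → MLFormula → MLFormula
  | box : MLFormula → MLFormula
  | dia : MLFormula → MLFormula

inductive MTLFormula : Type where
  | base : MLFormula → MTLFormula
  | mnot : MTLFormula → MTLFormula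
  | mand : MTLFormula → MTLFormula → MTLFormula
  | mor : MTLFormula → MTLFormula → MTLFormula
  | mbox : MTLFormula → MTLFormula
  | mdia : MTLFormula → MTLFormula

/-- A Kripke structure (with nonempty set of worlds, as usual). -/
structure Kripke : Type 1 where
  W : Type
  nonempty : Nonempty W
  R : W → W → Prop
  V : ℕ → Set W

/-- Classical Kripke semantics of ML. -/
def MLFormula.Sat (K : Kripke) (w : K.W) : MLFormula → Prop
  | .prop i => w ∈ K.V i
  | .neg φ => ¬ φ.Sat K w
  | .and φ ψ => φ.Sat K w ∧ ψ.Sat K w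
  | .or φ ψ => φ.Sat K w ∨ ψ.Sat K w
  | .box φ => ∀ v, K.R w v → φ.Sat K v
  | .dia φ => ∃ v, K.R w v ∧ φ.Sat K v

/-- The image `RT` of a team. -/
def Kripke.img (K : Kripke) (T : Set K.W) : Set K.W := { v | ∃ w ∈ T, K.R w v }

/-- `S` is a successor team of `T`: `S ⊆ RT` and `T ⊆ R⁻¹S`. -/
def Kripke.SuccTeam (K : Kripke) (T S : Set K.W) : Prop :=
  S ⊆ K.img T ∧ ∀ w ∈ T, ∃ v ∈ S, K.R w v

/-- Team semantics of MTL. -/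
def MTLSat (K : Kripke) : MTLFormula → Set K.W → Prop
  | .base α, T => ∀ w ∈ T, α.Sat K w
  | .mnot φ, T => ¬ MTLSat K φ T
  | .mand φ ψ, T => MTLSat K φ T ∧ MTLSat K ψ T
  | .mor φ ψ, T => ∃ S U, S ∪ U = T ∧ MTLSat K φ S ∧ MTLSat K ψ U
  | .mbox φ, T => MTLSat K φ (K.img T)
  | .mdia φ, T => ∃ S, K.SuccTeam T S ∧ MTLSat K φ S

/-! ## The standard translation from MTL to FO²(~) -/

/-- The vocabulary `τ_M`: one binary predicate `R` (index `none`) and unary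
predicates `P_i` (index `some i`). -/
def tauM : Vocab where
  Func := Empty
  fArity := fun e => e.elim
  Rel := Option ℕ
  rArity := fun R => match R with
    | none => 2
    | some _ => 1

/-- The two first-order variables `x` (for `false`) and `y` (for `true`). -/
def vIdx : Bool → ℕ
  | false => 0
  | true => 1

/-- The atom `R a b`. -/
def rAtom (a b : ℕ) : FOFormula tauM :=
  .rel none fun i => if (i : ℕ) = 0 then Term.var a else Term.var b

/-- The atom `P_i v`. -/
def pAtom (i v : ℕ) : FOFormula tauM :=
  .rel (some i) fun _ => Term.var v

/-- The standard translation of classical modal logic ML into FO². -/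
def STml : Bool → MLFormula → FOFormula tauM
  | v, .prop i => pAtom i (vIdx v)
  | v, .neg α => .not (STml v α)
  | v, .and α β => .and (STml v α) (STml v β)
  | v, .or α β => .or (STml v α) (STml v β)
  | v, .dia α => .ex (vIdx !v) (.and (rAtom (vIdx v) (vIdx !v)) (STml (!v) α))
  | v, .box α => .all (vIdx !v) (.or (.not (rAtom (vIdx v) (vIdx !v))) (STml (!v) α))

/-- The standard translation of MTL into FO²(~);
`st_x` is `ST false` and `st_y` is `ST true`. -/
def stt : Bool → MTLFormula → TFormula tauM emptyDeps
  | v, .base α => .base (STml v α)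
  | v, .mnot φ => .tnot (stt v φ)
  | v, .mand φ ψ => .tand (stt v φ) (stt v ψ)
  | v, .mor φ ψ => .tor (stt v φ) (stt v ψ)
  | v, .mdia φ => .tex (vIdx !v) (.tand (.base (rAtom (vIdx v) (vIdx !v))) (stt (!v) φ))
  | v, .mbox φ => .tall (vIdx !v)
      (.tor (.base (.not (rAtom (vIdx v) (vIdx !v))))
            (.tand (.base (rAtom (vIdx v) (vIdx !v))) (stt (!v) φ)))

/-- The first-order interpretation `𝒜(K)` of a Kripke structure. -/
def AK (K : Kripke) : Struc tauM where
  Dom := K.W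
  nonempty := K.nonempty
  funcs := fun f => f.elim
  rels := fun R => match R with
    | none => fun v => K.R (v ⟨0, Nat.zero_lt_two⟩) (v ⟨1, Nat.one_lt_two⟩)
    | some i => fun v => v ⟨0, Nat.zero_lt_one⟩ ∈ K.V i

/-- `T^x`: the team of first-order assignments `w^x` for `w ∈ T`. -/
def teamX (K : Kripke) (T : Set K.W) : Team (AK K) ({0} : Set ℕ) :=
  { s | ∃ w ∈ T, s = fun _ => w }

/-!
Induction on `φ`, for all tuples `x̄ ⊇ Fr(φ)` and teams `T` at once, with `R = x̄⟨T⟩`.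
Since `Fr(φ) ⊆ x̄`, an assignment matters to `φ` only through its restriction to `x̄`.
For the quantifier steps, a supplementing function `f` gives the witness
`S = (x̄;y)⟨T^y_f⟩`, and conversely a witness `S` gives the supplementing function whose
value at `t` is the slice `{a | (t^y_a)(x̄;y) ∈ S}`. The translation only inspects `R` at
tuples of the form `s(x̄)`, which need not be all tuples when `x̄` has repetitions, so `S`
and `(x̄;y)⟨T^y_f⟩` need only agree on such tuples.
-/

variable {τ : Vocab} {D : DepFamily} {β : Type*}

open Function

lemma Term.eval_congr (A : Struc τ) (t : Term τ) {s s' : ℕ → A.Dom}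
    (h : Set.EqOn s s' t.vars) : t.eval A s = t.eval A s' := by
  induction t with
  | var x => exact h rfl
  | app f ts ih =>
      exact congrArg (A.funcs f) <| funext fun i =>
        ih i (h.mono (Set.subset_iUnion (fun j => (ts j).vars) i))

lemma Set.EqOn.update_of_diff_singleton {F : Set ℕ} {x : ℕ} {s s' : ℕ → β}
    (h : Set.EqOn s s' (F \ {x})) (a : β) : Set.EqOn (update s x a) (update s' x a) F := by
  intro z hz
  by_cases hzx : z = x
  · simp [hzx]
  · simpa [hzx] using h ⟨hz, hzx⟩

lemma FOFormula.sat_congr (A : Struc τ) (α : FOFormula τ) {s s' : ℕ → A.Dom}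
    (h : Set.EqOn s s' α.Fr) : α.Sat A s ↔ α.Sat A s' := by
  induction α generalizing s s' with
  | rel R ts =>
      have hts : (fun i => (ts i).eval A s) = fun i => (ts i).eval A s' :=
        funext fun i =>
          Term.eval_congr A (ts i) (h.mono (Set.subset_iUnion (fun j => (ts j).vars) i))
      simp only [FOFormula.Sat, hts]
  | eq t u =>
      simp only [FOFormula.Sat, Term.eval_congr A t (h.mono Set.subset_union_left),
        Term.eval_congr A u (h.mono Set.subset_union_right)]
  | not φ ih => exact not_congr (ih h)
  | and φ ψ ihφ ihψ =>
      exact and_congr (ihφ (h.mono Set.subset_union_left)) (ihψ (h.mono Set.subset_union_right))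
  | or φ ψ ihφ ihψ =>
      exact or_congr (ihφ (h.mono Set.subset_union_left)) (ihψ (h.mono Set.subset_union_right))
  | ex x φ ih => exact exists_congr fun a => ih (h.update_of_diff_singleton a)
  | all x φ ih => exact forall_congr' fun a => ih (h.update_of_diff_singleton a)

lemma subset_range_semico {n : ℕ} {xs : Fin n → ℕ} {y : ℕ} {F : Set ℕ}
    (hF : F \ {y} ⊆ Set.range xs) : F ⊆ Set.range (semico xs y).2 := by
  intro z hz
  by_cases hzy : z = y
  · subst hzy
    by_cases hz : z ∈ Set.range xs
    · rwa [semico, if_pos hz]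
    · rw [semico, if_neg hz]
      exact ⟨Fin.last n, by simp⟩
  · obtain ⟨i, rfl⟩ := hF ⟨hz, hzy⟩
    by_cases hy : y ∈ Set.range xs
    · rw [semico, if_pos hy]
      exact ⟨i, rfl⟩
    · rw [semico, if_neg hy]
      exact ⟨i.castSucc, by simp⟩

lemma comp_semico_eq_iff {n : ℕ} (xs : Fin n → ℕ) (y : ℕ) (g h : ℕ → β) :
    g ∘ (semico xs y).2 = h ∘ (semico xs y).2 ↔ g ∘ xs = h ∘ xs ∧ g y = h y := by
  by_cases hy : y ∈ Set.range xs
  · rw [semico, if_pos hy]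
    obtain ⟨i, rfl⟩ := hy
    exact ⟨fun e => ⟨e, congrFun e i⟩, And.left⟩
  · rw [semico, if_neg hy]
    simp only [Fin.comp_snoc, Fin.snoc_inj]

lemma update_comp_eq_update_comp {n : ℕ} {xs : Fin n → ℕ} {g h : ℕ → β}
    (e : g ∘ xs = h ∘ xs) (y : ℕ) (b : β) : update g y b ∘ xs = update h y b ∘ xs := by
  funext i
  by_cases hi : xs i = y
  · simp [hi]
  · simpa [hi] using congrFun e i

lemma Assign.toTotal_supp {A : Struc τ} {Y : Set ℕ} (t : Assign A Y) (y : ℕ) (a : A.Dom) :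
    (t.supp y a).toTotal = update t.toTotal y a := by
  funext z
  by_cases hz : z = y
  · subst hz
    simp [Assign.toTotal, Assign.supp]
  · by_cases hzY : z ∈ Y
    · simp [Assign.toTotal, Assign.supp, hz, hzY]
    · simp [Assign.toTotal, hz, hzY]

lemma Team.supp_congr {A : Struc τ} {X : Set ℕ} (T : Team A X) (x : ℕ)
    {f g : Assign A X → Set A.Dom} (h : ∀ s ∈ T, f s = g s) : T.supp x f = T.supp x g := by
  ext t
  simp only [Team.supp, Set.mem_ofPred_eq]
  exact exists_congr fun s => and_congr_right fun hs => by rw [h s hs]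

lemma exists_union_eq_of_comp_mem_iff {n : ℕ} {xs : Fin n → ℕ} {R R' S U : Set (Fin n → β)}
    (h : ∀ s : ℕ → β, s ∘ xs ∈ R ↔ s ∘ xs ∈ R') (hR : R = S ∪ U) :
    ∃ S' U', R' = S' ∪ U' ∧ (∀ s : ℕ → β, s ∘ xs ∈ S ↔ s ∘ xs ∈ S') ∧
      ∀ s : ℕ → β, s ∘ xs ∈ U ↔ s ∘ xs ∈ U' := by
  set C := Set.range fun s : ℕ → β => s ∘ xs
  refine ⟨S ∩ C ∪ R' \ C, U ∩ C, ?_, fun s => ?_, fun s => ?_⟩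
  · ext v
    by_cases hv : v ∈ C
    · obtain ⟨s, rfl⟩ := hv
      have := h s
      simp only [hR, Set.mem_union] at this
      simp only [Set.mem_union, Set.mem_inter_iff, Set.mem_sdiff]
      tauto
    · simp [hv]
  · simp [C]
  · simp [C]

lemma etaSem_congr (A : Struc τ) (φ : TFormula τ D) {n : ℕ} (xs : Fin n → ℕ)
    {R R' : Set (Fin n → A.Dom)} (h : ∀ s : ℕ → A.Dom, s ∘ xs ∈ R ↔ s ∘ xs ∈ R') :
    etaSem A φ n xs R ↔ etaSem A φ n xs R' := by
  induction φ generalizing R R' with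
  | base α => exact forall_congr' fun s => imp_congr_left (h s)
  | atom i ts =>
      exact exists_congr fun S => and_congr_left' <| forall_congr' fun v =>
        iff_congr Iff.rfl <| exists_congr fun s => and_congr_left' (h s)
  | tnot φ ih => exact not_congr (ih h)
  | tand φ ψ ihφ ihψ => exact and_congr (ihφ h) (ihψ h)
  | tor φ ψ ihφ ihψ =>
      have transfer {R R' : Set (Fin n → A.Dom)}
          (h : ∀ s : ℕ → A.Dom, s ∘ xs ∈ R ↔ s ∘ xs ∈ R') :
          etaSem A (.tor φ ψ) n xs R → etaSem A (.tor φ ψ) n xs R' := by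
        rintro ⟨S, U, hR, hS, hU⟩
        obtain ⟨S', U', hR', hSS', hUU'⟩ := exists_union_eq_of_comp_mem_iff h (Set.ext hR)
        exact ⟨S', U', Set.ext_iff.1 hR', (ihφ hSS').1 hS, (ihψ hUU').1 hU⟩
      exact ⟨transfer h, transfer fun s => (h s).symm⟩
  | tex y φ =>
      exact exists_congr fun S => and_congr_left' <| forall_congr' fun s =>
        iff_congr (exists_congr fun b => h (update s y b)) Iff.rfl
  | tall y φ =>
      exact exists_congr fun S => and_congr
        (forall_congr' fun s => iff_congr (exists_congr fun b => h (update s y b)) Iff.rfl)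
        (and_congr_right' <| forall_congr' fun s => imp_congr_left (h s))

/-- Definitionally `tupleEval A (fun i => .var (xs i)) T`. -/
def Team.rel {A : Struc τ} {Y : Set ℕ} (T : Team A Y) {n : ℕ} (xs : Fin n → ℕ) :
    Set (Fin n → A.Dom) :=
  (fun t => t.toTotal ∘ xs) '' T

lemma Team.exists_union_eq_of_rel_eq_union {A : Struc τ} {Y : Set ℕ} {T : Team A Y} {n : ℕ}
    {xs : Fin n → ℕ} {S U : Set (Fin n → A.Dom)} (h : T.rel xs = S ∪ U) :
    ∃ T₁ T₂ : Team A Y, T₁ ∪ T₂ = T ∧ T₁.rel xs = S ∧ T₂.rel xs = U := by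
  set g := fun t : Assign A Y => t.toTotal ∘ xs
  refine ⟨T ∩ g ⁻¹' S, T ∩ g ⁻¹' U, ?_, ?_, ?_⟩
  · rw [← Set.inter_union_distrib_left, ← Set.preimage_union, ← h]
    exact Set.inter_eq_left.2 (Set.subset_preimage_image g T)
  · rw [Team.rel, Set.image_inter_preimage, ← Team.rel, h]
    exact Set.union_inter_cancel_left
  · rw [Team.rel, Set.image_inter_preimage, ← Team.rel, h]
    exact Set.union_inter_cancel_right

lemma tupleEval_eq_of_vars_subset {A : Struc τ} {Y : Set ℕ} (T : Team A Y) {n k : ℕ}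
    (xs : Fin n → ℕ) (ts : Fin k → Term τ) (hts : ⋃ j, (ts j).vars ⊆ Set.range xs) :
    tupleEval A ts T =
      {v | ∃ s : ℕ → A.Dom, s ∘ xs ∈ T.rel xs ∧ (fun j => (ts j).eval A s) = v} := by
  ext v
  constructor
  · rintro ⟨t, ht, rfl⟩
    exact ⟨t.toTotal, ⟨t, ht, rfl⟩, rfl⟩
  · rintro ⟨s, ⟨t, ht, e⟩, rfl⟩
    refine ⟨t, ht, funext fun j => Term.eval_congr A (ts j) fun x hx => ?_⟩
    obtain ⟨i, rfl⟩ := hts (Set.mem_iUnion.2 ⟨j, hx⟩)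
    exact congrFun e i

section Quantifier

variable {A : Struc τ} {Y : Set ℕ} (T : Team A Y) {n : ℕ} (xs : Fin n → ℕ) (y : ℕ)

lemma exists_update_mem_rel_supp_iff {f : Assign A Y → Set A.Dom}
    (hf : ∀ t ∈ T, (f t).Nonempty) (s : ℕ → A.Dom) :
    (∃ b, update s y b ∘ xs ∈ T.rel xs) ↔
      ∃ b, update s y b ∘ (semico xs y).2 ∈ (T.supp y f).rel (semico xs y).2 := by
  constructor
  · rintro ⟨b, t, ht, htb⟩
    obtain ⟨a, ha⟩ := hf t ht
    refine ⟨a, _, ⟨t, ht, a, ha, rfl⟩, ?_⟩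
    dsimp only
    rw [Assign.toTotal_supp, comp_semico_eq_iff]
    simpa using update_comp_eq_update_comp htb y a
  · rintro ⟨b, _, ⟨t, ht, a, -, rfl⟩, e⟩
    dsimp only at e
    rw [Assign.toTotal_supp, comp_semico_eq_iff] at e
    refine ⟨t.toTotal y, t, ht, ?_⟩
    simpa using update_comp_eq_update_comp e.1 y (t.toTotal y)

lemma update_comp_semico_mem_rel_supp_univ (s : ℕ → A.Dom) (hs : s ∘ xs ∈ T.rel xs)
    (b : A.Dom) :
    update s y b ∘ (semico xs y).2 ∈ (T.supp y fun _ => Set.univ).rel (semico xs y).2 := by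
  obtain ⟨t, ht, e⟩ := hs
  refine ⟨_, ⟨t, ht, b, trivial, rfl⟩, ?_⟩
  dsimp only
  rw [Assign.toTotal_supp, comp_semico_eq_iff]
  exact ⟨update_comp_eq_update_comp e y b, by simp⟩

def Assign.slice {m : ℕ} (S : Set (Fin m → A.Dom)) (zs : Fin m → ℕ) (t : Assign A Y) :
    Set A.Dom :=
  {a | update t.toTotal y a ∘ zs ∈ S}

section Slice

variable {S : Set (Fin (semico xs y).1 → A.Dom)}
  (hS : ∀ s : ℕ → A.Dom,
    (∃ b, update s y b ∘ xs ∈ T.rel xs) ↔ ∃ b, update s y b ∘ (semico xs y).2 ∈ S)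
include hS

lemma slice_nonempty : ∀ t ∈ T, (Assign.slice y S (semico xs y).2 t).Nonempty := by
  intro t ht
  exact (hS t.toTotal).1 ⟨t.toTotal y, t, ht, by simp⟩

lemma comp_mem_iff_mem_rel_supp_slice (s : ℕ → A.Dom) :
    s ∘ (semico xs y).2 ∈ S ↔
      s ∘ (semico xs y).2 ∈
        (T.supp y (Assign.slice y S (semico xs y).2)).rel (semico xs y).2 := by
  constructor
  · intro hs
    obtain ⟨b, t, ht, e⟩ := (hS s).2 ⟨s y, by simpa using hs⟩
    have hts : update t.toTotal y (s y) ∘ (semico xs y).2 = s ∘ (semico xs y).2 := by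
      rw [comp_semico_eq_iff]
      simpa using update_comp_eq_update_comp e y (s y)
    refine ⟨_, ⟨t, ht, s y, ?_, rfl⟩, ?_⟩
    · change update t.toTotal y (s y) ∘ (semico xs y).2 ∈ S
      rwa [hts]
    · dsimp only
      rwa [Assign.toTotal_supp]
  · rintro ⟨_, ⟨t, ht, a, ha, rfl⟩, e⟩
    dsimp only at e
    rw [Assign.toTotal_supp] at e
    exact e ▸ ha

end Slice

variable {φ : TFormula τ D}
  (ih : ∀ T' : Team A (Y ∪ {y}),
    TSat A φ (Y ∪ {y}) T' ↔ etaSem A φ _ (semico xs y).2 (T'.rel (semico xs y).2))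
include ih

lemma tsat_tex_iff_etaSem : TSat A (.tex y φ) Y T ↔ etaSem A (.tex y φ) n xs (T.rel xs) := by
  constructor
  · rintro ⟨f, hf, h⟩
    exact ⟨_, exists_update_mem_rel_supp_iff T xs y hf, (ih _).1 h⟩
  · rintro ⟨S, hS, h⟩
    refine ⟨_, slice_nonempty T xs y hS, (ih _).2 ?_⟩
    exact (etaSem_congr A φ _ (comp_mem_iff_mem_rel_supp_slice T xs y hS)).1 h

lemma tsat_tall_iff_etaSem : TSat A (.tall y φ) Y T ↔ etaSem A (.tall y φ) n xs (T.rel xs) := by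
  constructor
  · intro h
    have hf : ∀ t ∈ T, (Set.univ : Set A.Dom).Nonempty :=
      fun _ _ => ⟨Classical.choice A.nonempty, trivial⟩
    exact ⟨_, exists_update_mem_rel_supp_iff T xs y hf, (ih _).1 h,
      update_comp_semico_mem_rel_supp_univ T xs y⟩
  · rintro ⟨S, hS, h, hall⟩
    have huniv : ∀ t ∈ T, Assign.slice y S (semico xs y).2 t = Set.univ :=
      fun t ht => Set.eq_univ_of_forall (hall t.toTotal ⟨t, ht, rfl⟩)
    change TSat A φ _ (T.supp y fun _ => Set.univ)
    rw [← Team.supp_congr T y huniv, ih]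
    exact (etaSem_congr A φ _ (comp_mem_iff_mem_rel_supp_slice T xs y hS)).1 h

end Quantifier

theorem tsat_iff_etaSem (A : Struc τ) (φ : TFormula τ D) {n : ℕ} (xs : Fin n → ℕ)
    (hfr : φ.Fr ⊆ Set.range xs) {Y : Set ℕ} (T : Team A Y) :
    TSat A φ Y T ↔ etaSem A φ n xs (T.rel xs) := by
  induction φ generalizing n Y with
  | base α =>
      refine ⟨fun h s ⟨t, ht, e⟩ => ?_, fun h t ht => h t.toTotal ⟨t, ht, rfl⟩⟩
      refine (FOFormula.sat_congr A α fun x hx => ?_).1 (h t ht)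
      obtain ⟨i, rfl⟩ := hfr hx
      exact congrFun e i
  | atom i ts =>
      simp only [TSat, etaSem, tupleEval_eq_of_vars_subset T xs ts hfr]
      exact ⟨fun h => ⟨_, fun v => Iff.rfl, h⟩, fun ⟨S, hS, h⟩ => Set.ext hS ▸ h⟩
  | tnot φ ih => exact not_congr (ih xs hfr T)
  | tand φ ψ ihφ ihψ =>
      exact and_congr (ihφ xs (fun x hx => hfr (Or.inl hx)) T)
        (ihψ xs (fun x hx => hfr (Or.inr hx)) T)
  | tor φ ψ ihφ ihψ =>
      have hφ : φ.Fr ⊆ Set.range xs := fun x hx => hfr (Or.inl hx)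
      have hψ : ψ.Fr ⊆ Set.range xs := fun x hx => hfr (Or.inr hx)
      constructor
      · rintro ⟨S, U, rfl, hS, hU⟩
        exact ⟨_, _, Set.ext_iff.1 (Set.image_union _ S U), (ihφ xs hφ S).1 hS,
          (ihψ xs hψ U).1 hU⟩
      · rintro ⟨S, U, hR, hS, hU⟩
        obtain ⟨T₁, T₂, rfl, rfl, rfl⟩ := Team.exists_union_eq_of_rel_eq_union (Set.ext hR)
        exact ⟨T₁, T₂, rfl, (ihφ xs hφ T₁).2 hS, (ihψ xs hψ T₂).2 hU⟩
  | tex y φ ih => exact tsat_tex_iff_etaSem T xs y (ih _ (subset_range_semico hfr))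
  | tall y φ ih => exact tsat_tall_iff_etaSem T xs y (ih _ (subset_range_semico hfr))

theorem statement5_general {τ : Vocab} {D : DepFamily} (A : Struc τ) (φ : TFormula τ D)
    {n : ℕ} (xs : Fin n → ℕ) (hfr : φ.Fr ⊆ Set.range xs)
    {Y : Set ℕ} (T : Team A Y) :
    TSat A φ Y T ↔ etaSem A φ n xs (tupleEval A (fun i => Term.var (xs i)) T) :=
  tsat_iff_etaSem A φ xs hfr T

/-- For `φ ∈ FO(~,𝒟)`, a tuple `x̄ ⊇ Fr(φ)` and a team `T` with domain
`Y ⊇ x̄`: `(A,T) ⊨ φ` in team semantics iff `A ⊨ η^{x̄}_φ(x̄⟨T⟩)` in classical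
second-order semantics. -/
theorem statement5 {τ : Vocab} {D : DepFamily} (A : Struc τ) (φ : TFormula τ D)
    {n : ℕ} (xs : Fin n → ℕ) (hfr : φ.Fr ⊆ Set.range xs)
    {Y : Set ℕ} (hY : Set.range xs ⊆ Y) (T : Team A Y) :
    TSat A φ Y T ↔ etaSem A φ n xs (tupleEval A (fun i => Term.var (xs i)) T) :=
  statement5_general A φ xs hfr T
end

section
/- Let 𝒜 be a structure, let T be a team with domain the set X underlying the tuple x̄ = (x_1,…,x_n), let S be a team with domain X ∪ {y} (possibly y ∈ X), and let X' := X ∖ {y}. Then T↾X' = S↾X' if and only if 𝒜 ⊨ π(x̄⟨T⟩, (x̄;y)⟨S⟩), where π(T,S) := ∀x̄ ((∃y T x̄) ↔ (∃y S x̄;y)) and x̄;y denotes x̄ if y occurs in x̄ and (x_1,…,x_n,y) otherwise. -/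
set_option autoImplicit false

open Classical

/-! Both sides of `π` say the same thing about the assignment `s` restricted to `X'`: a tuple
`x̄[b/y]` lies in `x̄⟨T⟩` for some `b` iff some member of `T` agrees with `s` on `X'`, because
`X'` is exactly the set of variables of `x̄` other than `y`, and likewise for `x̄;y` and `S`. -/

theorem range_semico {n : ℕ} (xs : Fin n → ℕ) (y : ℕ) :
    Set.range (semico xs y).2 = Set.range xs ∪ {y} := by
  by_cases hy : y ∈ Set.range xs
  · rw [semico, if_pos hy, Set.union_eq_self_of_subset_right (Set.singleton_subset_iff.2 hy)]
  · rw [semico, if_neg hy, Fin.range_snoc, Set.union_singleton]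

namespace Assign

variable {τ : Vocab} {A : Struc τ}

theorem toTotal_of_mem {X : Set ℕ} (s : Assign A X) {x : ℕ} (hx : x ∈ X) :
    s.toTotal x = s ⟨x, hx⟩ :=
  dif_pos hx

end Assign

namespace Team

variable {τ : Vocab} {A : Struc τ}

theorem eq_iff_forall_restrict_mem {W : Set ℕ} (R R' : Team A W) :
    R = R' ↔ ∀ s : ℕ → A.Dom, (fun w : W => s w) ∈ R ↔ (fun w : W => s w) ∈ R' := by
  have := A.nonempty
  rw [Set.ext_iff]
  exact (Subtype.surjective_restrict (β := fun _ => A.Dom) (· ∈ W)).forall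

end Team

theorem mem_tupleEval_var_iff {τ : Vocab} (A : Struc τ) {Z : Set ℕ} {k : ℕ} (zs : Fin k → ℕ)
    (U : Team A Z) (v : Fin k → A.Dom) :
    v ∈ tupleEval A (fun i => Term.var (zs i)) U ↔ ∃ u ∈ U, ∀ i, u.toTotal (zs i) = v i := by
  simp only [tupleEval, Term.eval, Set.mem_image, funext_iff]

theorem exists_update_mem_tupleEval_var_iff {τ : Vocab} (A : Struc τ) {Z W : Set ℕ}
    (hWZ : W ⊆ Z) (U : Team A Z) {k : ℕ} (zs : Fin k → ℕ) {y : ℕ}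
    (hW : W = Set.range zs \ {y}) (s : ℕ → A.Dom) :
    (∃ b : A.Dom, (fun i => Function.update s y b (zs i)) ∈
        tupleEval A (fun i => Term.var (zs i)) U) ↔
      (fun w : W => s w) ∈ U.restrict hWZ := by
  simp only [mem_tupleEval_var_iff, Team.restrict, Set.mem_image, funext_iff, Subtype.forall,
    Assign.restrict]
  constructor
  · rintro ⟨b, u, hu, hus⟩
    refine ⟨u, hu, fun w hw => ?_⟩
    obtain ⟨⟨i, rfl⟩, hiy⟩ := hW ▸ hw
    rw [← Assign.toTotal_of_mem u (hWZ hw), hus i, Function.update_of_ne hiy]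
  · rintro ⟨u, hu, hus⟩
    refine ⟨u.toTotal y, u, hu, fun i => ?_⟩
    by_cases hiy : zs i = y
    · rw [hiy, Function.update_self]
    · have hiW : zs i ∈ W := hW ▸ ⟨⟨i, rfl⟩, hiy⟩
      rw [Assign.toTotal_of_mem u (hWZ hiW), hus _ hiW, Function.update_of_ne hiy]

/-- For a team `T` with domain `X = {x̄}` and a team `S` with domain
`X ∪ {y}`: `T↾X' = S↾X'` (where `X' = X \ {y}`) iff
`A ⊨ π(x̄⟨T⟩, (x̄;y)⟨S⟩)` where `π(T,S) = ∀x̄ ((∃y T x̄) ↔ (∃y S x̄;y))`,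
stated here in classical Tarski semantics. -/
theorem statement6 {τ : Vocab} (A : Struc τ) {n : ℕ} (xs : Fin n → ℕ) (y : ℕ)
    (T : Team A (Set.range xs)) (S : Team A (Set.range xs ∪ {y})) :
    T.restrict (Set.diff_subset : Set.range xs \ {y} ⊆ Set.range xs) =
      S.restrict (Set.diff_subset.trans Set.subset_union_left) ↔
    ∀ s : ℕ → A.Dom,
      (∃ b : A.Dom, (fun i => Function.update s y b (xs i)) ∈
        tupleEval A (fun i => Term.var (xs i)) T) ↔
      (∃ b : A.Dom, (fun j => Function.update s y b ((semico xs y).2 j)) ∈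
        tupleEval A (fun j => Term.var ((semico xs y).2 j)) S) := by
  have hX' : Set.range xs \ {y} = Set.range (semico xs y).2 \ {y} := by
    rw [range_semico, Set.union_sdiff_right]
  rw [Team.eq_iff_forall_restrict_mem]
  refine forall_congr' fun s => ?_
  rw [exists_update_mem_tupleEval_var_iff A _ T xs rfl,
    exists_update_mem_tupleEval_var_iff A _ S _ hX']
end

section
/- In FO(~) under team semantics, for all first-order formulas α_1, …, α_n and β_1, …, β_n, the equivalence ⋁_{i=1}^n (α_i ∧ E β_i) ≡ (⋁_{i=1}^n α_i) ∧ ⋀_{i=1}^n E(α_i ∧ β_i) holds, where ⋁ is the splitting disjunction ∨ iterated over i = 1,…,n. -/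
set_option autoImplicit false

open Classical

/-! The left side holds in `T` iff `T` is covered by teams `Fᵢ` with `αᵢ` true throughout `Fᵢ`
and `βᵢ` true somewhere in `Fᵢ`. Such a cover already witnesses the right side. Conversely,
given a cover by `αᵢ`-teams and points `wᵢ ∈ T` satisfying `αᵢ ∧ βᵢ`, the enlarged cover
`Fᵢ ∪ {wᵢ}` still covers `T`, and by flatness of `αᵢ` it witnesses the left side. -/

theorem Set.exists_iUnion_eq_and_exists_mem_iff {σ ι : Type*} (T : Set σ) (P Q : ι → σ → Prop) :
    (∃ F : ι → Set σ, ⋃ i, F i = T ∧ ∀ i, (∀ s ∈ F i, P i s) ∧ ∃ s ∈ F i, Q i s) ↔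
      (∃ F : ι → Set σ, ⋃ i, F i = T ∧ ∀ i, ∀ s ∈ F i, P i s) ∧
        ∀ i, ∃ s ∈ T, P i s ∧ Q i s := by
  constructor
  · rintro ⟨F, hcover, hF⟩
    refine ⟨⟨F, hcover, fun i => (hF i).1⟩, fun i => ?_⟩
    obtain ⟨s, hs, hQ⟩ := (hF i).2
    exact ⟨s, hcover ▸ Set.mem_iUnion_of_mem i hs, (hF i).1 s hs, hQ⟩
  · rintro ⟨⟨F, hcover, hP⟩, hw⟩
    choose w hwT hwP hwQ using hw
    refine ⟨fun i => insert (w i) (F i), ?_, fun i => ⟨?_, w i, Set.mem_insert _ _, hwQ i⟩⟩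
    · rw [← hcover, Set.iUnion_insert_eq_range_union_iUnion, hcover,
        Set.union_eq_right.mpr (Set.range_subset_iff.mpr hwT)]
    · rintro s (rfl | hs)
      exacts [hwP i, hP i s hs]

section TeamSemantics

variable {τ : Vocab} {D : DepFamily} (A : Struc τ) (X : Set ℕ)

theorem tSat_finBigOr_iff {n : ℕ} (χ : Fin (n + 1) → TFormula τ D) (T : Team A X) :
    TSat A (finBigOr χ) X T ↔
      ∃ F : Fin (n + 1) → Team A X, ⋃ i, F i = T ∧ ∀ i, TSat A (χ i) X (F i) := by
  induction n generalizing T with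
  | zero =>
    simp [finBigOr, bigOr, Fin.exists_fin_succ_pi]
  | succ n ih =>
    have hsplit : finBigOr χ = .tor (χ 0) (finBigOr fun i => χ i.succ) := by
      simp [finBigOr, bigOr, List.ofFn_succ]
    rw [hsplit, TSat, Fin.exists_fin_succ_pi]
    simp only [ih, Set.iUnion_cons]
    constructor
    · rintro ⟨S, _, rfl, hS, G, rfl, hG⟩
      exact ⟨S, G, rfl, Fin.cases hS hG⟩
    · rintro ⟨S, G, rfl, hF⟩
      exact ⟨S, _, rfl, hF 0, G, rfl, fun i => hF i.succ⟩

theorem tSat_finBigAnd_iff {n : ℕ} (χ : Fin (n + 1) → TFormula τ D) (T : Team A X) :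
    TSat A (finBigAnd χ) X T ↔ ∀ i, TSat A (χ i) X T := by
  induction n with
  | zero => simp [finBigAnd, bigAnd, Fin.forall_fin_one]
  | succ n ih =>
    have hsplit : finBigAnd χ = .tand (χ 0) (finBigAnd fun i => χ i.succ) := by
      simp [finBigAnd, bigAnd, List.ofFn_succ]
    rw [hsplit, TSat, ih]
    exact (Fin.forall_fin_succ (P := fun i => TSat A (χ i) X T)).symm

theorem tSat_E_iff (β : FOFormula τ) (T : Team A X) :
    TSat A (TFormula.E (D := D) β) X T ↔ ∃ s ∈ T, β.Sat A s.toTotal := by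
  simp [TFormula.E, TSat, FOFormula.Sat]

end TeamSemantics

/-- `⋁_{i=1}^n (α_i ∧ E β_i) ≡ (⋁_{i=1}^n α_i) ∧ ⋀_{i=1}^n E(α_i ∧ β_i)`
for first-order `α_i, β_i` (here with `n+1` formulas each, so that `n ≥ 1`). -/
theorem statement9 {τ : Vocab} {n : ℕ}
    (α β : Fin (n + 1) → FOFormula τ) :
    TEquiv (D := emptyDeps)
      (finBigOr fun i => .tand (.base (α i)) (TFormula.E (β i)))
      (.tand (finBigOr fun i => .base (α i))
             (finBigAnd fun i => TFormula.E (.and (α i) (β i)))) := by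
  intro A X _ T
  simp only [TSat, tSat_finBigOr_iff, tSat_finBigAnd_iff, tSat_E_iff, FOFormula.Sat]
  exact Set.exists_iUnion_eq_and_exists_mem_iff T _ _
end

section
/- In FO(~) under team semantics, the Boolean disjunction ⊻ distributes over the splitting disjunction ∨ from both sides: for all formulas ϑ_1, ϑ_2, ϑ_3 ∈ FO(~), (ϑ_1 ⊻ ϑ_2) ∨ ϑ_3 ≡ (ϑ_1 ∨ ϑ_3) ⊻ (ϑ_2 ∨ ϑ_3) and ϑ_1 ∨ (ϑ_2 ⊻ ϑ_3) ≡ (ϑ_1 ∨ ϑ_2) ⊻ (ϑ_1 ∨ ϑ_3). -/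
set_option autoImplicit false

open Classical

section Distrib

variable {τ : Vocab} {D : DepFamily} {A : Struc τ} {X : Set ℕ}

theorem TSat_bdis (φ ψ : TFormula τ D) (T : Team A X) :
    TSat A (φ.bdis ψ) X T ↔ TSat A φ X T ∨ TSat A ψ X T := by
  simp only [TFormula.bdis, TSat, not_and_or, not_not]

theorem TSat_tor_bdis_right (φ ψ χ : TFormula τ D) (T : Team A X) :
    TSat A (.tor (φ.bdis ψ) χ) X T ↔ TSat A (.tor φ χ) X T ∨ TSat A (.tor ψ χ) X T := by
  simp only [TSat, TSat_bdis, or_and_right, and_or_left, exists_or]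

theorem TSat_tor_bdis_left (φ ψ χ : TFormula τ D) (T : Team A X) :
    TSat A (.tor φ (ψ.bdis χ)) X T ↔ TSat A (.tor φ ψ) X T ∨ TSat A (.tor φ χ) X T := by
  simp only [TSat, TSat_bdis, and_or_left, exists_or]

theorem TEquiv_tor_bdis_right (φ ψ χ : TFormula τ D) :
    TEquiv (.tor (φ.bdis ψ) χ) ((φ.tor χ).bdis (ψ.tor χ)) := fun _ _ _ T => by
  rw [TSat_tor_bdis_right, TSat_bdis]

theorem TEquiv_tor_bdis_left (φ ψ χ : TFormula τ D) :
    TEquiv (.tor φ (ψ.bdis χ)) ((φ.tor ψ).bdis (φ.tor χ)) := fun _ _ _ T => by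
  rw [TSat_tor_bdis_left, TSat_bdis]

end Distrib

/-- The Boolean disjunction distributes over the splitting disjunction
from both sides, for all `ϑ_1, ϑ_2, ϑ_3 ∈ FO(~)`. -/
theorem statement10 {τ : Vocab} (θ₁ θ₂ θ₃ : TFormula τ emptyDeps) :
    TEquiv (.tor (θ₁.bdis θ₂) θ₃) ((θ₁.tor θ₃).bdis (θ₂.tor θ₃)) ∧
    TEquiv (.tor θ₁ (θ₂.bdis θ₃)) ((θ₁.tor θ₂).bdis (θ₁.tor θ₃)) :=
  ⟨TEquiv_tor_bdis_right θ₁ θ₂ θ₃, TEquiv_tor_bdis_left θ₁ θ₂ θ₃⟩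
end

section
/- In FO(~) under team semantics, the existential quantifier distributes over the splitting disjunction: for all formulas ϑ_1, ϑ_2 ∈ FO(~) and every variable x, ∃x (ϑ_1 ∨ ϑ_2) ≡ (∃x ϑ_1) ∨ (∃x ϑ_2). -/
set_option autoImplicit false

open Classical

/-!
If a supplement `T^x_f` splits as `S ∪ U`, then `T` splits into the assignments having an
`x`-extension in `S` and those having one in `U`, and these halves are supplemented to `S` and `U`
by keeping only the values landing there. Conversely, supplements of the two halves of `T` glue
to a supplement of `T` by taking, at each assignment, the union of the values of both
supplementing functions.
-/

namespace Team

variable {τ : Vocab} {A : Struc τ} {X : Set ℕ}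

def IsSupplement (T : Team A X) (x : ℕ) (S : Team A (X ∪ {x})) : Prop :=
  ∃ f : Assign A X → Set A.Dom, (∀ s ∈ T, (f s).Nonempty) ∧ T.supp x f = S

theorem isSupplement_of_subset_supp {T : Team A X} {x : ℕ} {f : Assign A X → Set A.Dom}
    {S : Team A (X ∪ {x})} (hS : S ⊆ T.supp x f) :
    IsSupplement {s ∈ T | ∃ a, s.supp x a ∈ S} x S := by
  refine ⟨fun s => {a | s.supp x a ∈ S}, fun s hs => hs.2, ?_⟩
  ext t
  constructor
  · rintro ⟨s, -, a, ha, rfl⟩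
    exact ha
  · intro ht
    obtain ⟨s, hs, a, -, rfl⟩ := hS ht
    exact ⟨s, ⟨hs, a, ht⟩, a, ht, rfl⟩

theorem IsSupplement.union {T₁ T₂ : Team A X} {x : ℕ} {S U : Team A (X ∪ {x})}
    (hS : T₁.IsSupplement x S) (hU : T₂.IsSupplement x U) :
    (T₁ ∪ T₂).IsSupplement x (S ∪ U) := by
  obtain ⟨f₁, hf₁, rfl⟩ := hS
  obtain ⟨f₂, hf₂, rfl⟩ := hU
  refine ⟨fun s => {a | s ∈ T₁ ∧ a ∈ f₁ s ∨ s ∈ T₂ ∧ a ∈ f₂ s}, ?_, ?_⟩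
  · rintro s (hs | hs)
    · obtain ⟨a, ha⟩ := hf₁ s hs
      exact ⟨a, .inl ⟨hs, ha⟩⟩
    · obtain ⟨a, ha⟩ := hf₂ s hs
      exact ⟨a, .inr ⟨hs, ha⟩⟩
  · ext t
    constructor
    · rintro ⟨s, -, a, ⟨hs, ha⟩ | ⟨hs, ha⟩, rfl⟩
      · exact .inl ⟨s, hs, a, ha, rfl⟩
      · exact .inr ⟨s, hs, a, ha, rfl⟩
    · rintro (⟨s, hs, a, ha, rfl⟩ | ⟨s, hs, a, ha, rfl⟩)
      · exact ⟨s, .inl hs, a, .inl ⟨hs, ha⟩, rfl⟩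
      · exact ⟨s, .inr hs, a, .inr ⟨hs, ha⟩, rfl⟩

theorem isSupplement_union_iff {T : Team A X} {x : ℕ} {S U : Team A (X ∪ {x})} :
    T.IsSupplement x (S ∪ U) ↔
      ∃ T₁ T₂ : Team A X, T₁ ∪ T₂ = T ∧ T₁.IsSupplement x S ∧ T₂.IsSupplement x U := by
  constructor
  · rintro ⟨f, hf, hSU⟩
    refine ⟨{s ∈ T | ∃ a, s.supp x a ∈ S}, {s ∈ T | ∃ a, s.supp x a ∈ U}, ?_,
      isSupplement_of_subset_supp (hSU ▸ Set.subset_union_left),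
      isSupplement_of_subset_supp (hSU ▸ Set.subset_union_right)⟩
    refine Set.Subset.antisymm (Set.union_subset (Set.sep_subset _ _) (Set.sep_subset _ _))
      fun s hs => ?_
    obtain ⟨a, ha⟩ := hf s hs
    have hsa : s.supp x a ∈ S ∪ U := hSU ▸ ⟨s, hs, a, ha, rfl⟩
    exact hsa.imp (fun h => ⟨hs, a, h⟩) (fun h => ⟨hs, a, h⟩)
  · rintro ⟨T₁, T₂, rfl, hS, hU⟩
    exact hS.union hU

end Team

theorem tSat_tex_iff {τ : Vocab} {D : DepFamily} (A : Struc τ) (x : ℕ) (φ : TFormula τ D)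
    (X : Set ℕ) (T : Team A X) :
    TSat A (.tex x φ) X T ↔ ∃ S, T.IsSupplement x S ∧ TSat A φ (X ∪ {x}) S := by
  constructor
  · rintro ⟨f, hf, hφ⟩
    exact ⟨_, ⟨f, hf, rfl⟩, hφ⟩
  · rintro ⟨_, ⟨f, hf, rfl⟩, hφ⟩
    exact ⟨f, hf, hφ⟩

theorem tSat_tor_iff {τ : Vocab} {D : DepFamily} (A : Struc τ) (φ ψ : TFormula τ D)
    (X : Set ℕ) (T : Team A X) :
    TSat A (.tor φ ψ) X T ↔ ∃ S U : Team A X, S ∪ U = T ∧ TSat A φ X S ∧ TSat A ψ X U :=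
  Iff.rfl

/-- `∃x (ϑ_1 ∨ ϑ_2) ≡ (∃x ϑ_1) ∨ (∃x ϑ_2)` for all `ϑ_1, ϑ_2 ∈ FO(~)`. -/
theorem statement12 {τ : Vocab} (x : ℕ) (θ₁ θ₂ : TFormula τ emptyDeps) :
    TEquiv (.tex x (θ₁.tor θ₂)) ((TFormula.tex x θ₁).tor (.tex x θ₂)) := by
  intro A X _ T
  simp only [tSat_tex_iff, tSat_tor_iff]
  constructor
  · rintro ⟨_, hT, S, U, rfl, hS, hU⟩
    obtain ⟨T₁, T₂, rfl, hT₁, hT₂⟩ := Team.isSupplement_union_iff.mp hT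
    exact ⟨T₁, T₂, rfl, ⟨S, hT₁, hS⟩, ⟨U, hT₂, hU⟩⟩
  · rintro ⟨T₁, T₂, rfl, ⟨S, hT₁, hS⟩, ⟨U, hT₂, hU⟩⟩
    exact ⟨S ∪ U, hT₁.union hT₂, S, U, rfl, hS, hU⟩
end
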